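/- arXiv:2309.06331 — 5 statements merged into one kernel-verified Lean document; each statement's English description precedes it below -/
import Mathlib

section
/- Suppose {v_j}_{j=1}^k is a frame in ℝ^n with frame bounds A < B (not necessarily optimal). For every ε > 0 there exist vectors {δ_j}_{j=1}^k with ‖δ_j‖ < ε such that {v_j + δ_j}_{j=1}^k is a frame with frame bounds A₁, B₁ satisfying B₁/A₁ < B/A. -/
/-!
Write `S = ∑ⱼ ⟪·, vⱼ⟫ vⱼ` for the frame operator, so that the best frame bounds are the extreme
eigenvalues of `S`, and replace `vⱼ` by `(1 - tS) vⱼ`. The new frame operator is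
`(1 - tS) S (1 - tS)`, whose eigenvalues are `μ (1 - tμ)²` for the eigenvalues `μ ∈ [A, B]` of `S`.
For `3tB ≤ 1` the map `μ ↦ μ (1 - tμ)²` is increasing on `(-∞, B]`, so the new frame has bounds
`A (1 - tA)²` and `B (1 - tB)²`, whose ratio is `B/A` times `((1 - tB)/(1 - tA))² < 1`.
For small `t` the perturbations `t S vⱼ` are as small as we like.
-/

open Filter Topology
open scoped RealInnerProductSpace

variable {ι E : Type*} [Fintype ι] [NormedAddCommGroup E] [InnerProductSpace ℝ E]

def HasFrameBounds (v : ι → E) (A B : ℝ) : Prop :=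
  ∀ x, A * ‖x‖ ^ 2 ≤ ∑ j, ⟪x, v j⟫ ^ 2 ∧ ∑ j, ⟪x, v j⟫ ^ 2 ≤ B * ‖x‖ ^ 2

noncomputable def frameOp (v : ι → E) : E →ₗ[ℝ] E where
  toFun x := ∑ j, ⟪x, v j⟫ • v j
  map_add' x y := by simp only [inner_add_left, add_smul, Finset.sum_add_distrib]
  map_smul' c x := by simp only [real_inner_smul_left, mul_smul, Finset.smul_sum, RingHom.id_apply]

lemma frameOp_apply (v : ι → E) (x : E) : frameOp v x = ∑ j, ⟪x, v j⟫ • v j := rfl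

lemma inner_frameOp_left (v : ι → E) (x y : E) :
    ⟪frameOp v x, y⟫ = ∑ j, ⟪x, v j⟫ * ⟪v j, y⟫ := by
  simp only [frameOp_apply, sum_inner, real_inner_smul_left]

lemma isSymmetric_frameOp (v : ι → E) : (frameOp v).IsSymmetric := fun x y => by
  rw [inner_frameOp_left, real_inner_comm, inner_frameOp_left]
  exact Finset.sum_congr rfl fun j _ => by rw [real_inner_comm x, real_inner_comm y]; ring

lemma inner_frameOp_self (v : ι → E) (x : E) : ⟪frameOp v x, x⟫ = ∑ j, ⟪x, v j⟫ ^ 2 := by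
  rw [inner_frameOp_left]
  exact Finset.sum_congr rfl fun j _ => by rw [real_inner_comm x]; ring

lemma hasFrameBounds_iff (v : ι → E) (A B : ℝ) :
    HasFrameBounds v A B ↔
      ∀ x, A * ‖x‖ ^ 2 ≤ ⟪frameOp v x, x⟫ ∧ ⟪frameOp v x, x⟫ ≤ B * ‖x‖ ^ 2 := by
  simp only [HasFrameBounds, inner_frameOp_self]

lemma frameOp_comp_of_isSymmetric {R : E →ₗ[ℝ] E} (hR : R.IsSymmetric) (v : ι → E) :
    frameOp (fun j => R (v j)) = R ∘ₗ frameOp v ∘ₗ R := by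
  ext x
  simp only [frameOp_apply, LinearMap.comp_apply, map_sum, map_smul, hR x]

namespace LinearMap.IsSymmetric

variable {κ : Type*} [Fintype κ] {T : E →ₗ[ℝ] E}

lemma inner_map_self_eq_sum (hT : T.IsSymmetric) (b : OrthonormalBasis κ ℝ E) {μ : κ → ℝ}
    (hb : ∀ i, T (b i) = μ i • b i) (x : E) : ⟪T x, x⟫ = ∑ i, μ i * ⟪b i, x⟫ ^ 2 := by
  rw [← b.sum_inner_mul_inner]
  exact Finset.sum_congr rfl fun i _ => by
    rw [hT, hb, real_inner_smul_right, real_inner_comm x]; ring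

lemma inner_map_self_bounds (hT : T.IsSymmetric) (b : OrthonormalBasis κ ℝ E) {μ : κ → ℝ}
    (hb : ∀ i, T (b i) = μ i • b i) {a c : ℝ} (hμ : ∀ i, a ≤ μ i ∧ μ i ≤ c) (x : E) :
    a * ‖x‖ ^ 2 ≤ ⟪T x, x⟫ ∧ ⟪T x, x⟫ ≤ c * ‖x‖ ^ 2 := by
  rw [hT.inner_map_self_eq_sum b hb, ← b.sum_sq_inner_right, Finset.mul_sum, Finset.mul_sum]
  exact ⟨Finset.sum_le_sum fun i _ => mul_le_mul_of_nonneg_right (hμ i).1 (sq_nonneg _),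
    Finset.sum_le_sum fun i _ => mul_le_mul_of_nonneg_right (hμ i).2 (sq_nonneg _)⟩

end LinearMap.IsSymmetric

lemma HasFrameBounds.eigenvalue_mem {v : ι → E} {A B : ℝ} (h : HasFrameBounds v A B) {u : E}
    (hu : ‖u‖ = 1) {μ : ℝ} (hμ : frameOp v u = μ • u) : A ≤ μ ∧ μ ≤ B := by
  have hμu : ⟪frameOp v u, u⟫ = μ := by
    rw [hμ, real_inner_smul_left, real_inner_self_eq_norm_sq, hu, one_pow, mul_one]
  simpa only [← hμu, hu, one_pow, mul_one] using (hasFrameBounds_iff v A B).1 h u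

lemma mul_one_sub_mul_sq_le {a b t : ℝ} (ht : 0 ≤ t) (hab : a ≤ b) (hb : 3 * t * b ≤ 1) :
    a * (1 - t * a) ^ 2 ≤ b * (1 - t * b) ^ 2 := by
  have hta : 3 * t * a ≤ 1 := by nlinarith
  -- `b (1 - tb)² - a (1 - ta)² = (b - a) ((1 - ta - tb)² - t² a b)`
  have hfactor : 0 ≤ (1 - t * a - t * b) ^ 2 - (t * a) * (t * b) := by nlinarith
  nlinarith [mul_nonneg (sub_nonneg.2 hab) hfactor]

lemma mul_one_sub_mul_sq_div_lt {A B t : ℝ} (hA : 0 < A) (hAB : A < B) (ht : 0 < t)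
    (htB : 3 * t * B ≤ 1) : B * (1 - t * B) ^ 2 / (A * (1 - t * A) ^ 2) < B / A := by
  have hA₁ : 0 < A * (1 - t * A) ^ 2 := by
    have : 0 < 1 - t * A := by nlinarith
    positivity
  have hB₀ : 0 ≤ 1 - t * B := by linarith
  have hBA : 1 - t * B < 1 - t * A := by nlinarith
  have hsq : (1 - t * B) ^ 2 < (1 - t * A) ^ 2 := by nlinarith
  rw [div_lt_div_iff₀ hA₁ hA]
  nlinarith [mul_lt_mul_of_pos_left hsq (mul_pos hA (hA.trans hAB))]

theorem HasFrameBounds.sub_smul_frameOp [FiniteDimensional ℝ E] {v : ι → E} {A B t : ℝ}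
    (h : HasFrameBounds v A B) (ht : 0 ≤ t) (htB : 3 * t * B ≤ 1) :
    HasFrameBounds (fun j => v j - t • frameOp v (v j)) (A * (1 - t * A) ^ 2)
      (B * (1 - t * B) ^ 2) := by
  have hS : (frameOp v).IsSymmetric := isSymmetric_frameOp v
  let R : E →ₗ[ℝ] E := LinearMap.id - t • frameOp v
  have hR : R.IsSymmetric := LinearMap.IsSymmetric.id.sub (hS.smul (conj_trivial t))
  let b := hS.eigenvectorBasis rfl
  let μ := hS.eigenvalues rfl
  have hSb (i) : frameOp v (b i) = μ i • b i := hS.apply_eigenvectorBasis rfl i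
  have hRb (i) : R (b i) = (1 - t * μ i) • b i := by
    simp only [R, LinearMap.sub_apply, LinearMap.id_apply, LinearMap.smul_apply, hSb, smul_smul,
      sub_smul, one_smul]
  have hw : (fun j => v j - t • frameOp v (v j)) = fun j => R (v j) := rfl
  have hμ (i) : A ≤ μ i ∧ μ i ≤ B := h.eigenvalue_mem (b.orthonormal.1 i) (hSb i)
  rw [hasFrameBounds_iff, hw]
  refine (isSymmetric_frameOp _).inner_map_self_bounds b (fun i => ?_) fun i =>
    ⟨mul_one_sub_mul_sq_le ht (hμ i).1 (by nlinarith [(hμ i).2]),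
      mul_one_sub_mul_sq_le ht (hμ i).2 htB⟩
  rw [frameOp_comp_of_isSymmetric hR]
  simp only [LinearMap.comp_apply, hRb, map_smul, hSb, smul_smul]
  congr 1
  ring

lemma eventually_forall_norm_smul_lt (w : ι → E) {ε : ℝ} (hε : 0 < ε) :
    ∀ᶠ t in 𝓝 (0 : ℝ), ∀ j, ‖t • w j‖ < ε :=
  eventually_all.2 fun j =>
    ((continuous_id.smul continuous_const).norm.tendsto' 0 0 (by simp)).eventually
      (gt_mem_nhds hε)

theorem better_frame {n k : ℕ} (v : Fin k → EuclideanSpace ℝ (Fin n)) (A B : ℝ)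
    (hA : 0 < A) (hAB : A < B)
    (hframe : ∀ x : EuclideanSpace ℝ (Fin n),
      A * ‖x‖ ^ 2 ≤ ∑ j, ⟪x, v j⟫ ^ 2 ∧ ∑ j, ⟪x, v j⟫ ^ 2 ≤ B * ‖x‖ ^ 2)
    (ε : ℝ) (hε : 0 < ε) :
    ∃ δ : Fin k → EuclideanSpace ℝ (Fin n), (∀ j, ‖δ j‖ < ε) ∧
      ∃ A₁ B₁ : ℝ, 0 < A₁ ∧ A₁ ≤ B₁ ∧
        (∀ x : EuclideanSpace ℝ (Fin n),
          A₁ * ‖x‖ ^ 2 ≤ ∑ j, ⟪x, v j + δ j⟫ ^ 2 ∧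
          ∑ j, ⟪x, v j + δ j⟫ ^ 2 ≤ B₁ * ‖x‖ ^ 2) ∧
        B₁ / A₁ < B / A := by
  have hB : 0 < B := hA.trans hAB
  have hsmall : ∀ᶠ t in 𝓝 (0 : ℝ), t < 1 / (3 * B) ∧ ∀ j, ‖t • frameOp v (v j)‖ < ε :=
    (eventually_lt_nhds (by positivity)).and (eventually_forall_norm_smul_lt _ hε)
  obtain ⟨t, ht, htB, hδ⟩ :=
    ((eventually_mem_nhdsWithin (s := Set.Ioi 0)).and (nhdsWithin_le_nhds hsmall)).exists
  have htB : 3 * t * B ≤ 1 := by linarith [(lt_div_iff₀ (by positivity)).1 htB]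
  have htA : 0 < 1 - t * A := by nlinarith
  refine ⟨fun j => -(t • frameOp v (v j)), fun j => (norm_neg _).trans_lt (hδ j),
    A * (1 - t * A) ^ 2, B * (1 - t * B) ^ 2, by positivity,
    mul_one_sub_mul_sq_le ht.le hAB.le htB, ?_, mul_one_sub_mul_sq_div_lt hA hAB ht htB⟩
  simpa only [HasFrameBounds, sub_eq_add_neg] using HasFrameBounds.sub_smul_frameOp hframe ht.le htB
end

section
/- Suppose {v_j}_{j=1}^k is a frame in ℝ^n with lower frame bound A > 0. If ε ≤ √A/√k, then for every family {δ_j}_{j=1}^k of vectors in ℝ^n with ‖δ_j‖ < ε for all j, the family {v_j + δ_j}_{j=1}^k is a frame in ℝ^n. -/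
/-!
Write `T_w x := (⟪x, w j⟫)_j ∈ ℓ²(ι)` for the analysis map of a family `w`, so that
`T_{v+δ} = T_v + T_δ`.
The lower frame bound says `‖T_v x‖ ≥ √A ‖x‖`, and Cauchy–Schwarz in each coordinate gives
`‖T_δ x‖ ≤ √S ‖x‖` with `S = ∑ ‖δ j‖²`. Since `S < k ε² ≤ A`, the triangle inequality gives
`‖T_{v+δ} x‖ ≥ (√A - √S) ‖x‖` with `√A - √S > 0`.
-/

open scoped RealInnerProductSpace

section

variable {ι E : Type*} [NormedAddCommGroup E] [InnerProductSpace ℝ E]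

def frameAnalysis (v : ι → E) (x : E) : EuclideanSpace ℝ ι :=
  WithLp.toLp 2 fun j => ⟪x, v j⟫

theorem frameAnalysis_add (v w : ι → E) (x : E) :
    frameAnalysis (v + w) x = frameAnalysis v x + frameAnalysis w x := by
  ext j
  simp [frameAnalysis, inner_add_right]

variable [Fintype ι]

theorem norm_frameAnalysis_sq (v : ι → E) (x : E) :
    ‖frameAnalysis v x‖ ^ 2 = ∑ j, ⟪x, v j⟫ ^ 2 := by
  simp [frameAnalysis, EuclideanSpace.real_norm_sq_eq]

theorem sum_inner_sq_le (w : ι → E) (x : E) :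
    ∑ j, ⟪x, w j⟫ ^ 2 ≤ (∑ j, ‖w j‖ ^ 2) * ‖x‖ ^ 2 := by
  rw [Finset.sum_mul]
  gcongr with j
  rw [← mul_pow, ← sq_abs, mul_comm]
  exact pow_le_pow_left₀ (abs_nonneg _) (abs_real_inner_le_norm x (w j)) 2

theorem norm_frameAnalysis_le (w : ι → E) (x : E) :
    ‖frameAnalysis w x‖ ≤ √(∑ j, ‖w j‖ ^ 2) * ‖x‖ := by
  refine (pow_le_pow_iff_left₀ (norm_nonneg _) (by positivity) two_ne_zero).mp ?_
  rw [mul_pow, Real.sq_sqrt (by positivity), norm_frameAnalysis_sq]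
  exact sum_inner_sq_le w x

theorem sqrt_mul_norm_le_norm_frameAnalysis {v : ι → E} {A : ℝ}
    (hlow : ∀ x, A * ‖x‖ ^ 2 ≤ ∑ j, ⟪x, v j⟫ ^ 2) (x : E) :
    √A * ‖x‖ ≤ ‖frameAnalysis v x‖ := by
  have h := Real.sqrt_le_sqrt ((norm_frameAnalysis_sq v x).symm ▸ hlow x)
  rwa [Real.sqrt_mul' _ (by positivity), Real.sqrt_sq (norm_nonneg x),
    Real.sqrt_sq (norm_nonneg _)] at h

theorem lower_frame_bound_add {v : ι → E} {A : ℝ}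
    (hlow : ∀ x, A * ‖x‖ ^ 2 ≤ ∑ j, ⟪x, v j⟫ ^ 2) (δ : ι → E) (hδ : ∑ j, ‖δ j‖ ^ 2 ≤ A)
    (x : E) : (√A - √(∑ j, ‖δ j‖ ^ 2)) ^ 2 * ‖x‖ ^ 2 ≤ ∑ j, ⟪x, v j + δ j⟫ ^ 2 := by
  have hgap : 0 ≤ (√A - √(∑ j, ‖δ j‖ ^ 2)) * ‖x‖ :=
    mul_nonneg (sub_nonneg.mpr (Real.sqrt_le_sqrt hδ)) (norm_nonneg x)
  have hT : (√A - √(∑ j, ‖δ j‖ ^ 2)) * ‖x‖ ≤ ‖frameAnalysis (v + δ) x‖ :=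
    calc (√A - √(∑ j, ‖δ j‖ ^ 2)) * ‖x‖
        ≤ ‖frameAnalysis v x‖ - ‖frameAnalysis δ x‖ := by
          rw [sub_mul]
          gcongr
          exacts [sqrt_mul_norm_le_norm_frameAnalysis hlow x, norm_frameAnalysis_le δ x]
      _ ≤ ‖frameAnalysis (v + δ) x‖ := by
          rw [frameAnalysis_add]
          exact norm_sub_le_norm_add _ _
  rw [← mul_pow, ← norm_frameAnalysis_sq]
  exact pow_le_pow_left₀ hgap hT 2

end

theorem sum_norm_sq_lt_of_norm_lt {ι F : Type*} [Fintype ι] [SeminormedAddCommGroup F]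
    {A ε : ℝ} (hA : 0 < A) (hε : ε ≤ √A / √(Fintype.card ι)) (δ : ι → F) (hδ : ∀ j, ‖δ j‖ < ε) :
    ∑ j, ‖δ j‖ ^ 2 < A := by
  rcases isEmpty_or_nonempty ι with hι | hι
  · simpa using hA
  have hε0 : 0 ≤ ε := (norm_nonneg _).trans (hδ (Classical.arbitrary ι)).le
  have hcard : (0 : ℝ) < √(Fintype.card ι) := Real.sqrt_pos.mpr (by simpa using Fintype.card_pos)
  have hεcard : ε * √(Fintype.card ι) ≤ √A := (le_div_iff₀ hcard).mp hε
  calc ∑ j, ‖δ j‖ ^ 2 < ∑ _j : ι, ε ^ 2 :=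
        Finset.sum_lt_sum_of_nonempty Finset.univ_nonempty fun j _ =>
          pow_lt_pow_left₀ (hδ j) (norm_nonneg _) two_ne_zero
    _ = (ε * √(Fintype.card ι)) ^ 2 := by
        rw [Finset.sum_const, Finset.card_univ, nsmul_eq_mul, mul_pow,
          Real.sq_sqrt (Nat.cast_nonneg _), mul_comm]
    _ ≤ A := by
        simpa [Real.sq_sqrt hA.le] using pow_le_pow_left₀ (by positivity) hεcard 2

theorem frame_stability {n k : ℕ} (v : Fin k → EuclideanSpace ℝ (Fin n)) (A : ℝ)
    (hA : 0 < A)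
    (hlow : ∀ x : EuclideanSpace ℝ (Fin n), A * ‖x‖ ^ 2 ≤ ∑ j, ⟪x, v j⟫ ^ 2)
    (ε : ℝ) (hε : ε ≤ Real.sqrt A / Real.sqrt k)
    (δ : Fin k → EuclideanSpace ℝ (Fin n)) (hδ : ∀ j, ‖δ j‖ < ε) :
    ∃ A' B' : ℝ, 0 < A' ∧ A' ≤ B' ∧
      ∀ x : EuclideanSpace ℝ (Fin n),
        A' * ‖x‖ ^ 2 ≤ ∑ j, ⟪x, v j + δ j⟫ ^ 2 ∧
        ∑ j, ⟪x, v j + δ j⟫ ^ 2 ≤ B' * ‖x‖ ^ 2 := by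
  set S := ∑ j, ‖δ j‖ ^ 2
  have hSA : S < A := sum_norm_sq_lt_of_norm_lt hA (by rwa [Fintype.card_fin]) δ hδ
  have hgap : 0 < √A - √S := sub_pos.mpr (Real.sqrt_lt_sqrt (by positivity) hSA)
  refine ⟨(√A - √S) ^ 2, (√A - √S) ^ 2 + ∑ j, ‖v j + δ j‖ ^ 2, by positivity,
    le_add_of_nonneg_right (by positivity),
    fun x => ⟨lower_frame_bound_add hlow δ hSA.le x, ?_⟩⟩
  calc ∑ j, ⟪x, v j + δ j⟫ ^ 2 ≤ (∑ j, ‖v j + δ j‖ ^ 2) * ‖x‖ ^ 2 := sum_inner_sq_le _ x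
    _ ≤ ((√A - √S) ^ 2 + ∑ j, ‖v j + δ j‖ ^ 2) * ‖x‖ ^ 2 := by
        gcongr
        exact le_add_of_nonneg_left (by positivity)
end

section
/- Suppose {v_j}_{j=1}^k is a unit-norm tight frame in ℝ^n. If ε ≤ 1/√n, then for every family {δ_j}_{j=1}^k with ‖δ_j‖ < ε for all j, the family {v_j + δ_j}_{j=1}^k is a frame in ℝ^n. -/
/-!
Write `T_w x = (⟪x, w j⟫)_j ∈ ℓ²(k)` for the analysis map of a family `w`. Tightness says
`‖T_v x‖ = √A ‖x‖`, and Cauchy–Schwarz gives `‖T_δ x‖ ≤ √D ‖x‖` with `D = ∑ ‖δ j‖²`, so the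
triangle inequality in `ℓ²` yields frame bounds `(√A ∓ √D)²` for `v + δ` as soon as `D < A`.
Summing the tight-frame identity over an orthonormal basis gives `k = A n` for unit vectors,
hence `D < k ε² ≤ k / n = A`.
-/

open scoped RealInnerProductSpace

variable {ι E : Type*} [NormedAddCommGroup E] [InnerProductSpace ℝ E]

def analysisMap (v : ι → E) (x : E) : EuclideanSpace ℝ ι :=
  WithLp.toLp 2 fun j => ⟪x, v j⟫

theorem analysisMap_add (v δ : ι → E) (x : E) :
    analysisMap (v + δ) x = analysisMap v x + analysisMap δ x := by
  ext j
  simp [analysisMap, inner_add_right]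

variable [Fintype ι]

def IsFrame (v : ι → E) (A B : ℝ) : Prop :=
  0 < A ∧ A ≤ B ∧ ∀ x : E, A * ‖x‖ ^ 2 ≤ ∑ j, ⟪x, v j⟫ ^ 2 ∧ ∑ j, ⟪x, v j⟫ ^ 2 ≤ B * ‖x‖ ^ 2

theorem norm_analysisMap_sq (v : ι → E) (x : E) :
    ‖analysisMap v x‖ ^ 2 = ∑ j, ⟪x, v j⟫ ^ 2 :=
  EuclideanSpace.real_norm_sq_eq _

theorem sum_inner_sq_le_sum_sq_norm_mul (δ : ι → E) (x : E) :
    ∑ j, ⟪x, δ j⟫ ^ 2 ≤ (∑ j, ‖δ j‖ ^ 2) * ‖x‖ ^ 2 := by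
  rw [Finset.sum_mul]
  refine Finset.sum_le_sum fun j _ => ?_
  rw [← mul_pow, mul_comm, ← sq_abs]
  exact pow_le_pow_left₀ (abs_nonneg _) (abs_real_inner_le_norm x (δ j)) 2

theorem sqrt_mul_le_of_mul_sq_le {a s t : ℝ} (ha : 0 ≤ a) (hs : 0 ≤ s) (ht : 0 ≤ t)
    (h : a * t ^ 2 ≤ s ^ 2) : √a * t ≤ s := by
  rwa [← sq_le_sq₀ (by positivity) hs, mul_pow, Real.sq_sqrt ha]

theorem le_sqrt_mul_of_sq_le_mul {a s t : ℝ} (ha : 0 ≤ a) (hs : 0 ≤ s) (ht : 0 ≤ t)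
    (h : s ^ 2 ≤ a * t ^ 2) : s ≤ √a * t := by
  rwa [← sq_le_sq₀ hs (by positivity), mul_pow, Real.sq_sqrt ha]

theorem norm_analysisMap_le (δ : ι → E) (x : E) :
    ‖analysisMap δ x‖ ≤ √(∑ j, ‖δ j‖ ^ 2) * ‖x‖ :=
  le_sqrt_mul_of_sq_le_mul (by positivity) (norm_nonneg _) (norm_nonneg x)
    ((norm_analysisMap_sq δ x).trans_le (sum_inner_sq_le_sum_sq_norm_mul δ x))

theorem IsFrame.add_of_sum_sq_norm_lt {v δ : ι → E} {A B : ℝ} (hv : IsFrame v A B)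
    (hδ : ∑ j, ‖δ j‖ ^ 2 < A) :
    IsFrame (v + δ) ((√A - √(∑ j, ‖δ j‖ ^ 2)) ^ 2) ((√B + √(∑ j, ‖δ j‖ ^ 2)) ^ 2) := by
  obtain ⟨hA, hAB, hbounds⟩ := hv
  set D := ∑ j, ‖δ j‖ ^ 2
  have hD : 0 ≤ D := by positivity
  have hDA : √D < √A := Real.sqrt_lt_sqrt hD hδ
  have hAB' : √A ≤ √B := Real.sqrt_le_sqrt hAB
  refine ⟨pow_pos (sub_pos.mpr hDA) 2,
    pow_le_pow_left₀ (sub_pos.mpr hDA).le (by linarith [Real.sqrt_nonneg D]) 2, fun x => ?_⟩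
  set u := analysisMap v x
  set d := analysisMap δ x
  have hu_lower : √A * ‖x‖ ≤ ‖u‖ :=
    sqrt_mul_le_of_mul_sq_le hA.le (norm_nonneg u) (norm_nonneg x)
      ((norm_analysisMap_sq v x).symm ▸ (hbounds x).1)
  have hu_upper : ‖u‖ ≤ √B * ‖x‖ :=
    le_sqrt_mul_of_sq_le_mul (hA.trans_le hAB).le (norm_nonneg u) (norm_nonneg x)
      ((norm_analysisMap_sq v x).symm ▸ (hbounds x).2)
  have hd : ‖d‖ ≤ √D * ‖x‖ := norm_analysisMap_le δ x
  rw [← norm_analysisMap_sq, analysisMap_add, ← mul_pow, ← mul_pow]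
  constructor
  · refine pow_le_pow_left₀ (mul_nonneg (sub_pos.mpr hDA).le (norm_nonneg x)) ?_ 2
    calc (√A - √D) * ‖x‖ ≤ ‖u‖ - ‖d‖ := by linarith
      _ ≤ ‖u + d‖ := norm_sub_le_norm_add u d
  · refine pow_le_pow_left₀ (norm_nonneg _) ?_ 2
    calc ‖u + d‖ ≤ ‖u‖ + ‖d‖ := norm_add_le u d
      _ ≤ (√B + √D) * ‖x‖ := by linarith

theorem sum_sq_norm_eq_mul_finrank_of_tight [FiniteDimensional ℝ E] {v : ι → E} {A : ℝ}
    (htight : ∀ x : E, ∑ j, ⟪x, v j⟫ ^ 2 = A * ‖x‖ ^ 2) :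
    ∑ j, ‖v j‖ ^ 2 = A * Module.finrank ℝ E := by
  let b := stdOrthonormalBasis ℝ E
  calc ∑ j, ‖v j‖ ^ 2 = ∑ j, ∑ i, ⟪b i, v j⟫ ^ 2 := by simp_rw [b.sum_sq_inner_right]
    _ = ∑ i, ∑ j, ⟪b i, v j⟫ ^ 2 := Finset.sum_comm
    _ = ∑ _i : Fin (Module.finrank ℝ E), A := by simp_rw [htight, b.orthonormal.1, one_pow, mul_one]
    _ = A * Module.finrank ℝ E := by simp [mul_comm]

theorem card_eq_mul_finrank_of_unit_tight [FiniteDimensional ℝ E] {v : ι → E} {A : ℝ}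
    (hunit : ∀ j, ‖v j‖ = 1) (htight : ∀ x : E, ∑ j, ⟪x, v j⟫ ^ 2 = A * ‖x‖ ^ 2) :
    (Fintype.card ι : ℝ) = A * Module.finrank ℝ E := by
  simpa [hunit] using sum_sq_norm_eq_mul_finrank_of_tight htight

theorem natCast_mul_sq_le_one {n : ℕ} {ε : ℝ} (hε0 : 0 ≤ ε) (hε : ε ≤ 1 / √n) :
    n * ε ^ 2 ≤ 1 :=
  calc n * ε ^ 2 ≤ n * (1 / √n) ^ 2 := by gcongr
    _ = n * (n : ℝ)⁻¹ := by rw [div_pow, one_pow, Real.sq_sqrt n.cast_nonneg, one_div]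
    _ ≤ 1 := mul_inv_le_one

theorem unit_tight_frame_stability {n k : ℕ} (v : Fin k → EuclideanSpace ℝ (Fin n))
    (hunit : ∀ j, ‖v j‖ = 1) (A : ℝ) (hA : 0 < A)
    (htight : ∀ x : EuclideanSpace ℝ (Fin n), ∑ j, ⟪x, v j⟫ ^ 2 = A * ‖x‖ ^ 2)
    (ε : ℝ) (hε : ε ≤ 1 / Real.sqrt n)
    (δ : Fin k → EuclideanSpace ℝ (Fin n)) (hδ : ∀ j, ‖δ j‖ < ε) :
    ∃ A' B' : ℝ, 0 < A' ∧ A' ≤ B' ∧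
      ∀ x : EuclideanSpace ℝ (Fin n),
        A' * ‖x‖ ^ 2 ≤ ∑ j, ⟪x, v j + δ j⟫ ^ 2 ∧
        ∑ j, ⟪x, v j + δ j⟫ ^ 2 ≤ B' * ‖x‖ ^ 2 := by
  have hk : (k : ℝ) = A * n := by
    simpa using card_eq_mul_finrank_of_unit_tight hunit htight
  have hD : ∑ j, ‖δ j‖ ^ 2 < A := by
    rcases isEmpty_or_nonempty (Fin k) with _ | ⟨⟨j₀⟩⟩
    · simpa using hA
    have hε0 : 0 ≤ ε := (norm_nonneg _).trans (hδ j₀).le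
    calc ∑ j, ‖δ j‖ ^ 2 < ∑ _j : Fin k, ε ^ 2 :=
          Finset.sum_lt_sum_of_nonempty ⟨j₀, Finset.mem_univ _⟩ fun j _ =>
            pow_lt_pow_left₀ (hδ j) (norm_nonneg _) two_ne_zero
      _ = A * (n * ε ^ 2) := by simp [hk, mul_assoc]
      _ ≤ A := mul_le_of_le_one_right hA.le (natCast_mul_sq_le_one hε0 hε)
  have hframe : IsFrame v A A := ⟨hA, le_rfl, fun x => ⟨(htight x).ge, (htight x).le⟩⟩
  exact ⟨_, _, hframe.add_of_sum_sq_norm_lt hD⟩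
end

section
/- The bound 1/√n in the stability of unit tight frames is sharp: for the standard orthonormal basis {e₁, e₂} of ℝ², which is a unit tight frame, and ε = 1/√2, there exist perturbations δ₁, δ₂ with ‖δ_j‖ ≤ ε such that {e₁ + δ₁, e₂ + δ₂} is not a frame for ℝ². (Concretely, take e_j + δ_j = (1/2, 1/2) for j = 1, 2.) -/
open scoped RealInnerProductSpace

theorem sharpness_of_stability_bound :
    ∃ δ : Fin 2 → EuclideanSpace ℝ (Fin 2),
      (∀ j, ‖δ j‖ ≤ 1 / Real.sqrt 2) ∧
      (∀ j i, (EuclideanSpace.single j (1 : ℝ) + δ j) i = 1 / 2) ∧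
      ¬ ∃ A : ℝ, 0 < A ∧ ∀ x : EuclideanSpace ℝ (Fin 2),
        A * ‖x‖ ^ 2 ≤ ∑ j, ⟪x, EuclideanSpace.single j (1 : ℝ) + δ j⟫ ^ 2 := by
  classical
  set c : EuclideanSpace ℝ (Fin 2) := (WithLp.equiv 2 (Fin 2 → ℝ)).symm ![1/2, 1/2] with hc
  have hcval : ∀ i, c i = 1 / 2 := by
    intro i; fin_cases i <;> simp [hc]
  have hkey : ∀ j i, ((EuclideanSpace.single j (1 : ℝ) + (c - EuclideanSpace.single j 1) :
      EuclideanSpace ℝ (Fin 2))) i = 1 / 2 := by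
    intro j i
    have h1 : EuclideanSpace.single j (1 : ℝ) + (c - EuclideanSpace.single j 1) = c := by abel
    rw [h1, hcval]
  refine ⟨fun j => c - EuclideanSpace.single j (1 : ℝ), ?_, hkey, ?_⟩
  · intro j
    have hcomp : ∀ i : Fin 2, ‖(c - EuclideanSpace.single j (1 : ℝ)) i‖ ^ 2 = (1/4 : ℝ) := by
      intro i
      have hi : (c - EuclideanSpace.single j (1 : ℝ)) i = c i - (if i = j then 1 else 0) := by
        simp [EuclideanSpace.single_apply]
      rw [hi, hcval, Real.norm_eq_abs, sq_abs]
      by_cases h : i = j <;> simp [h] <;> norm_num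
    have : ‖c - EuclideanSpace.single j (1 : ℝ)‖ = Real.sqrt (1 / 2) := by
      rw [EuclideanSpace.norm_eq]
      congr 1
      rw [Finset.sum_congr rfl fun i _ => hcomp i]
      simp; norm_num
    rw [this, one_div, one_div, ← Real.sqrt_inv]
  · rintro ⟨A, hA, hAl⟩
    set x : EuclideanSpace ℝ (Fin 2) := (WithLp.equiv 2 (Fin 2 → ℝ)).symm ![1, -1] with hx
    have hxval : x 0 = 1 ∧ x 1 = -1 := by constructor <;> simp [hx]
    have hxnorm : ‖x‖ ^ 2 = 2 := by
      rw [EuclideanSpace.norm_eq, Real.sq_sqrt (by positivity)]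
      simp [Fin.sum_univ_two, hxval.1, hxval.2]
      norm_num
    have hinner : ∀ j : Fin 2, ⟪x, EuclideanSpace.single j (1 : ℝ) + (c - EuclideanSpace.single j 1)⟫ = 0 := by
      intro j
      rw [PiLp.inner_apply, Fin.sum_univ_two, hkey j 0, hkey j 1, hxval.1, hxval.2]
      norm_num
    have := hAl x
    rw [hxnorm] at this
    simp only [hinner] at this
    simp at this
    linarith
end

section
/- Let {x_n}_{n∈ℕ} be a frame in a Hilbert space H with lower frame bound A, and let {y_n}_{n∈ℕ} be a sequence in H such that ‖Σ_n c_n(x_n − y_n)‖ ≤ μ(Σ_n |c_n|²)^{1/2} for all finite sequences {c_n}, where 0 ≤ μ < √A. Let τ < √A/μ. Then for every sequence of complex numbers {t_n} with |t_n| ≤ τ for all n, the family {(1−t_n)x_n + t_n y_n}_{n∈ℕ} is a frame for H. -/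
open scoped ComplexInnerProductSpace

private lemma fin_minkowski (s : Finset ℕ) (f g : ℕ → ℝ) (hf : ∀ n, 0 ≤ f n)
    (hg : ∀ n, 0 ≤ g n) :
    ∑ n ∈ s, (f n + g n) ^ 2 ≤
      (Real.sqrt (∑ n ∈ s, f n ^ 2) + Real.sqrt (∑ n ∈ s, g n ^ 2)) ^ 2 := by
  have cs := Real.sum_mul_le_sqrt_mul_sqrt s f g
  have hf2 : (0:ℝ) ≤ ∑ n ∈ s, f n ^ 2 := Finset.sum_nonneg fun n _ => sq_nonneg _
  have hg2 : (0:ℝ) ≤ ∑ n ∈ s, g n ^ 2 := Finset.sum_nonneg fun n _ => sq_nonneg _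
  have h1 : Real.sqrt (∑ n ∈ s, f n ^ 2) ^ 2 = ∑ n ∈ s, f n ^ 2 := Real.sq_sqrt hf2
  have h2 : Real.sqrt (∑ n ∈ s, g n ^ 2) ^ 2 = ∑ n ∈ s, g n ^ 2 := Real.sq_sqrt hg2
  have expand : ∑ n ∈ s, (f n + g n) ^ 2
      = ∑ n ∈ s, f n ^ 2 + 2 * ∑ n ∈ s, f n * g n + ∑ n ∈ s, g n ^ 2 := by
    have hpt : ∀ n, (f n + g n) ^ 2 = f n ^ 2 + 2 * (f n * g n) + g n ^ 2 :=
      fun n => by ring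
    simp_rw [hpt, Finset.sum_add_distrib, Finset.mul_sum]
  nlinarith [Real.sqrt_nonneg (∑ n ∈ s, f n ^ 2), Real.sqrt_nonneg (∑ n ∈ s, g n ^ 2)]

set_option maxHeartbeats 1000000 in
theorem convex_combination_frame {H : Type*} [NormedAddCommGroup H]
    [InnerProductSpace ℂ H] [CompleteSpace H]
    (x y : ℕ → H) (A B μ τ : ℝ) (hA : 0 < A) (hAB : A ≤ B)
    (hframe : ∀ z : H, A * ‖z‖ ^ 2 ≤ ∑' n, ‖⟪z, x n⟫‖ ^ 2 ∧
      ∑' n, ‖⟪z, x n⟫‖ ^ 2 ≤ B * ‖z‖ ^ 2)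
    (hμ0 : 0 ≤ μ) (hμ : μ < Real.sqrt A)
    (hpert : ∀ (s : Finset ℕ) (c : ℕ → ℂ),
      ‖∑ n ∈ s, c n • (x n - y n)‖ ≤ μ * Real.sqrt (∑ n ∈ s, ‖c n‖ ^ 2))
    (hτ : τ < Real.sqrt A / μ)
    (t : ℕ → ℂ) (ht : ∀ n, ‖t n‖ ≤ τ) :
    ∃ A' B' : ℝ, 0 < A' ∧ A' ≤ B' ∧ ∀ z : H,
      A' * ‖z‖ ^ 2 ≤ ∑' n, ‖⟪z, (1 - t n) • x n + t n • y n⟫‖ ^ 2 ∧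
      ∑' n, ‖⟪z, (1 - t n) • x n + t n • y n⟫‖ ^ 2 ≤ B' * ‖z‖ ^ 2 := by
  classical
  have hτ0 : 0 ≤ τ := le_trans (norm_nonneg _) (ht 0)
  have hμpos : 0 < μ := by
    rcases lt_or_eq_of_le hμ0 with h | h
    · exact h
    · exfalso; rw [← h, div_zero] at hτ; linarith
  have hsA : 0 < Real.sqrt A := Real.sqrt_pos.2 hA
  have hsB : Real.sqrt A ≤ Real.sqrt B := Real.sqrt_le_sqrt hAB
  have hτμ : τ * μ < Real.sqrt A := by
    rw [lt_div_iff₀ hμpos] at hτ; exact hτ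
  have hτμ0 : 0 ≤ τ * μ := mul_nonneg hτ0 hμ0
  refine ⟨(Real.sqrt A - τ * μ) ^ 2, (Real.sqrt B + τ * μ) ^ 2, pow_pos (by linarith) 2, ?_, ?_⟩
  · apply pow_le_pow_left₀ (by linarith) (by linarith) 2
  intro z
  by_cases hz : z = 0
  · subst hz; simp
  have hz2 : (0:ℝ) < ‖z‖ := norm_pos_iff.2 hz
  set d : ℕ → H := fun n => x n - y n with hd
  -- basic functions
  set u : ℕ → ℝ := fun n => ‖⟪z, x n⟫‖ with hu
  set v : ℕ → ℝ := fun n => ‖t n‖ * ‖⟪z, d n⟫‖ with hv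
  set w : ℕ → ℝ := fun n => ‖⟪z, (1 - t n) • x n + t n • y n⟫‖ with hw
  have hginner : ∀ n, ⟪z, (1 - t n) • x n + t n • y n⟫ = ⟪z, x n⟫ - t n * ⟪z, d n⟫ := by
    intro n
    simp only [hd, inner_add_right, inner_smul_right, inner_sub_right]
    ring
  -- summability of u^2
  have hsumu2 : Summable (fun n => u n ^ 2) := by
    by_contra hns
    have h0 := (hframe z).1
    rw [tsum_eq_zero_of_not_summable hns] at h0
    have := mul_pos hA (pow_pos hz2 2)
    linarith
  -- Bessel bound for d
  have hbound : ∀ s : Finset ℕ, ∑ n ∈ s, ‖⟪z, d n⟫‖ ^ 2 ≤ μ ^ 2 * ‖z‖ ^ 2 := by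
    intro s
    set c : ℕ → ℂ := fun n => starRingEnd ℂ ⟪z, d n⟫ with hc
    set S : ℝ := ∑ n ∈ s, ‖⟪z, d n⟫‖ ^ 2 with hS
    have hS0 : 0 ≤ S := Finset.sum_nonneg fun n _ => sq_nonneg _
    have hinner : ⟪z, ∑ n ∈ s, c n • d n⟫ = (S : ℂ) := by
      rw [inner_sum]
      simp only [inner_smul_right, hc]
      rw [hS]
      push_cast
      exact Finset.sum_congr rfl fun n _ => by
        rw [RCLike.conj_mul]; norm_cast
    have hnormc : ∀ n, ‖c n‖ = ‖⟪z, d n⟫‖ := fun n => norm_star _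
    have hcs : S ≤ ‖z‖ * (μ * Real.sqrt S) := by
      have h1 : S = ‖⟪z, ∑ n ∈ s, c n • d n⟫‖ := by
        rw [hinner]; simp [abs_of_nonneg hS0]
      have h2 := norm_inner_le_norm (𝕜 := ℂ) z (∑ n ∈ s, c n • d n)
      have h3 := hpert s c
      have h4 : ∑ n ∈ s, ‖c n‖ ^ 2 = S := by
        rw [hS]; exact Finset.sum_congr rfl fun n _ => by rw [hnormc]
      rw [h4] at h3
      calc S = ‖⟪z, ∑ n ∈ s, c n • d n⟫‖ := h1
        _ ≤ ‖z‖ * ‖∑ n ∈ s, c n • d n‖ := h2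
        _ ≤ ‖z‖ * (μ * Real.sqrt S) := by
            exact mul_le_mul_of_nonneg_left h3 (norm_nonneg _)
    rcases eq_or_lt_of_le hS0 with h | h
    · nlinarith
    · have hsq : Real.sqrt S ^ 2 = S := Real.sq_sqrt hS0
      have hsp : 0 < Real.sqrt S := Real.sqrt_pos.2 h
      have : Real.sqrt S ≤ μ * ‖z‖ := by nlinarith
      nlinarith
  have hsumd2 : Summable (fun n => ‖⟪z, d n⟫‖ ^ 2) :=
    summable_of_sum_le (fun n => sq_nonneg _) hbound
  have htsumd2 : ∑' n, ‖⟪z, d n⟫‖ ^ 2 ≤ μ ^ 2 * ‖z‖ ^ 2 :=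
    Summable.tsum_le_of_sum_le hsumd2 hbound
  -- bounds on v
  have hv_le : ∀ n, v n ^ 2 ≤ τ ^ 2 * ‖⟪z, d n⟫‖ ^ 2 := by
    intro n
    have := ht n
    have h1 : 0 ≤ ‖⟪z, d n⟫‖ := norm_nonneg _
    have h2 : 0 ≤ ‖t n‖ := norm_nonneg _
    show (‖t n‖ * ‖⟪z, d n⟫‖) ^ 2 ≤ τ ^ 2 * ‖⟪z, d n⟫‖ ^ 2
    have h3 : ‖t n‖ ^ 2 ≤ τ ^ 2 := by nlinarith
    calc (‖t n‖ * ‖⟪z, d n⟫‖) ^ 2 = ‖t n‖ ^ 2 * ‖⟪z, d n⟫‖ ^ 2 := by ring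
      _ ≤ τ ^ 2 * ‖⟪z, d n⟫‖ ^ 2 := mul_le_mul_of_nonneg_right h3 (sq_nonneg _)
  have hsumv2 : Summable (fun n => v n ^ 2) := by
    apply Summable.of_nonneg_of_le (fun n => sq_nonneg _) hv_le
    exact hsumd2.mul_left _
  have htsumv2 : ∑' n, v n ^ 2 ≤ τ ^ 2 * μ ^ 2 * ‖z‖ ^ 2 := by
    calc ∑' n, v n ^ 2 ≤ ∑' n, τ ^ 2 * ‖⟪z, d n⟫‖ ^ 2 :=
          Summable.tsum_le_tsum hv_le hsumv2 (hsumd2.mul_left _)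
      _ = τ ^ 2 * ∑' n, ‖⟪z, d n⟫‖ ^ 2 := tsum_mul_left
      _ ≤ τ ^ 2 * (μ ^ 2 * ‖z‖ ^ 2) := by
          exact mul_le_mul_of_nonneg_left htsumd2 (sq_nonneg _)
      _ = τ ^ 2 * μ ^ 2 * ‖z‖ ^ 2 := by ring
  -- pointwise triangle inequalities
  have hwn : ∀ n, w n = ‖⟪z, x n⟫ - t n * ⟪z, d n⟫‖ :=
    fun n => congrArg norm (hginner n)
  have hvn : ∀ n, v n = ‖t n * ⟪z, d n⟫‖ := fun n => (norm_mul _ _).symm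
  have hw_le : ∀ n, w n ≤ u n + v n := by
    intro n
    rw [hwn, hvn]
    exact norm_sub_le _ _
  have hu_le : ∀ n, u n ≤ w n + v n := by
    intro n
    rw [hwn, hvn]
    have : ⟪z, x n⟫ = (⟪z, x n⟫ - t n * ⟪z, d n⟫) + t n * ⟪z, d n⟫ := by ring
    calc u n = ‖(⟪z, x n⟫ - t n * ⟪z, d n⟫) + t n * ⟪z, d n⟫‖ := by rw [← this]
      _ ≤ ‖⟪z, x n⟫ - t n * ⟪z, d n⟫‖ + ‖t n * ⟪z, d n⟫‖ := norm_add_le _ _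
  have hu0 : ∀ n, 0 ≤ u n := fun n => norm_nonneg _
  have hv0 : ∀ n, 0 ≤ v n := fun n => mul_nonneg (norm_nonneg _) (norm_nonneg _)
  have hw0 : ∀ n, 0 ≤ w n := fun n => norm_nonneg _
  -- summability of w^2
  have hsumw2 : Summable (fun n => w n ^ 2) := by
    apply Summable.of_nonneg_of_le (fun n => sq_nonneg _)
      (fun n => ?_) ((hsumu2.mul_left 2).add (hsumv2.mul_left 2))
    have h1 := hw_le n; have h2 := hu0 n; have h3 := hv0 n; have h4 := hw0 n
    nlinarith [mul_le_mul h1 h1 h4 (add_nonneg h2 h3), sq_nonneg (u n - v n)]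
  set P : ℝ := Real.sqrt (∑' n, u n ^ 2) with hP
  set Q : ℝ := Real.sqrt (∑' n, v n ^ 2) with hQ
  set W : ℝ := Real.sqrt (∑' n, w n ^ 2) with hW
  have hP0 : 0 ≤ P := Real.sqrt_nonneg _
  have hQ0 : 0 ≤ Q := Real.sqrt_nonneg _
  have hW0 : 0 ≤ W := Real.sqrt_nonneg _
  have htu0 : 0 ≤ ∑' n, u n ^ 2 := tsum_nonneg fun n => sq_nonneg _
  have htv0 : 0 ≤ ∑' n, v n ^ 2 := tsum_nonneg fun n => sq_nonneg _
  have htw0 : 0 ≤ ∑' n, w n ^ 2 := tsum_nonneg fun n => sq_nonneg _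
  have hP2 : P ^ 2 = ∑' n, u n ^ 2 := Real.sq_sqrt htu0
  have hQ2 : Q ^ 2 = ∑' n, v n ^ 2 := Real.sq_sqrt htv0
  have hW2 : W ^ 2 = ∑' n, w n ^ 2 := Real.sq_sqrt htw0
  have hPlB : P ≤ Real.sqrt B * ‖z‖ := by
    rw [hP]
    calc Real.sqrt (∑' n, u n ^ 2) ≤ Real.sqrt (B * ‖z‖ ^ 2) :=
          Real.sqrt_le_sqrt (hframe z).2
      _ = Real.sqrt B * ‖z‖ := by
          rw [Real.sqrt_mul (by linarith) _, Real.sqrt_sq (norm_nonneg _)]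
  have hPgA : Real.sqrt A * ‖z‖ ≤ P := by
    rw [hP]
    have : Real.sqrt (A * ‖z‖ ^ 2) ≤ Real.sqrt (∑' n, u n ^ 2) :=
      Real.sqrt_le_sqrt (hframe z).1
    rwa [Real.sqrt_mul hA.le, Real.sqrt_sq (norm_nonneg _)] at this
  have hQle : Q ≤ τ * μ * ‖z‖ := by
    rw [hQ]
    calc Real.sqrt (∑' n, v n ^ 2) ≤ Real.sqrt (τ ^ 2 * μ ^ 2 * ‖z‖ ^ 2) :=
          Real.sqrt_le_sqrt htsumv2
      _ = τ * μ * ‖z‖ := by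
          rw [show τ ^ 2 * μ ^ 2 * ‖z‖ ^ 2 = (τ * μ * ‖z‖) ^ 2 by ring,
            Real.sqrt_sq (by positivity)]
  -- upper frame bound
  have hupper : ∑' n, w n ^ 2 ≤ (P + Q) ^ 2 := by
    apply Summable.tsum_le_of_sum_le hsumw2
    intro s
    calc ∑ n ∈ s, w n ^ 2 ≤ ∑ n ∈ s, (u n + v n) ^ 2 := by
          apply Finset.sum_le_sum
          intro n _
          have h1 := hw_le n; have h2 := hw0 n; have h3 := hu0 n; have h4 := hv0 n
          nlinarith [mul_le_mul h1 h1 h2 (add_nonneg h3 h4)]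
      _ ≤ (Real.sqrt (∑ n ∈ s, u n ^ 2) + Real.sqrt (∑ n ∈ s, v n ^ 2)) ^ 2 :=
          fin_minkowski s u v hu0 hv0
      _ ≤ (P + Q) ^ 2 := by
          have h1 : Real.sqrt (∑ n ∈ s, u n ^ 2) ≤ P :=
            Real.sqrt_le_sqrt (Summable.sum_le_tsum s (fun n _ => sq_nonneg _) hsumu2)
          have h2 : Real.sqrt (∑ n ∈ s, v n ^ 2) ≤ Q :=
            Real.sqrt_le_sqrt (Summable.sum_le_tsum s (fun n _ => sq_nonneg _) hsumv2)
          have h3 : 0 ≤ Real.sqrt (∑ n ∈ s, u n ^ 2) := Real.sqrt_nonneg _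
          have h4 : 0 ≤ Real.sqrt (∑ n ∈ s, v n ^ 2) := Real.sqrt_nonneg _
          nlinarith
  -- lower frame bound
  have hlowerP : ∑' n, u n ^ 2 ≤ (W + Q) ^ 2 := by
    apply Summable.tsum_le_of_sum_le hsumu2
    intro s
    calc ∑ n ∈ s, u n ^ 2 ≤ ∑ n ∈ s, (w n + v n) ^ 2 := by
          apply Finset.sum_le_sum
          intro n _
          have h1 := hu_le n; have h2 := hw0 n; have h3 := hu0 n; have h4 := hv0 n
          nlinarith [mul_le_mul h1 h1 h3 (add_nonneg h2 h4)]
      _ ≤ (Real.sqrt (∑ n ∈ s, w n ^ 2) + Real.sqrt (∑ n ∈ s, v n ^ 2)) ^ 2 :=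
          fin_minkowski s w v hw0 hv0
      _ ≤ (W + Q) ^ 2 := by
          have h1 : Real.sqrt (∑ n ∈ s, w n ^ 2) ≤ W :=
            Real.sqrt_le_sqrt (Summable.sum_le_tsum s (fun n _ => sq_nonneg _) hsumw2)
          have h2 : Real.sqrt (∑ n ∈ s, v n ^ 2) ≤ Q :=
            Real.sqrt_le_sqrt (Summable.sum_le_tsum s (fun n _ => sq_nonneg _) hsumv2)
          have h3 : 0 ≤ Real.sqrt (∑ n ∈ s, w n ^ 2) := Real.sqrt_nonneg _
          have h4 : 0 ≤ Real.sqrt (∑ n ∈ s, v n ^ 2) := Real.sqrt_nonneg _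
          nlinarith
  have hPWQ : P ≤ W + Q := by
    rw [hP]
    calc Real.sqrt (∑' n, u n ^ 2) ≤ Real.sqrt ((W + Q) ^ 2) :=
          Real.sqrt_le_sqrt hlowerP
      _ = W + Q := Real.sqrt_sq (add_nonneg hW0 hQ0)
  constructor
  · -- lower bound
    have hWge : Real.sqrt A * ‖z‖ - τ * μ * ‖z‖ ≤ W := by linarith
    have hge0 : 0 ≤ Real.sqrt A * ‖z‖ - τ * μ * ‖z‖ := by
      nlinarith [mul_nonneg (sub_nonneg.2 hτμ.le) hz2.le]
    nlinarith [mul_self_le_mul_self hge0 hWge]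
  · -- upper bound
    have hPQ : P + Q ≤ (Real.sqrt B + τ * μ) * ‖z‖ := by
      rw [add_mul]; linarith
    calc ∑' n, w n ^ 2 ≤ (P + Q) ^ 2 := hupper
      _ ≤ (Real.sqrt B + τ * μ) ^ 2 * ‖z‖ ^ 2 := by
          nlinarith [mul_self_le_mul_self (add_nonneg hP0 hQ0) hPQ]
end
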